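/- arXiv:2601.11444 — 2 statements merged into one kernel-verified Lean document; each statement's English description precedes it below -/
import Mathlib

section
/- Equality H(a) + H(b) = H(a+b) for the harmonic mean holds if and only if there exists \lambda > 0 with a = \lambda b. -/
/-!
Write `A = ∑ 1/aₖ`, `B = ∑ 1/bₖ`, `C = ∑ 1/(aₖ + bₖ)`. The equality of harmonic means says
`AB = (A + B)C`. Summing the two-variable identity
`B²/x + A²/y - (A + B)²/(x + y) = (By - Ax)²/(xy(x + y))` over `x = aₖ`, `y = bₖ` gives
`(A + B)(AB - (A + B)C) = ∑ (Bbₖ - Aaₖ)²/(aₖbₖ(aₖ + bₖ))`, a sum of nonnegative terms. So equality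
holds iff `Aaₖ = Bbₖ` for every `k`, i.e. iff `a = (B/A) b`.
-/

open Finset

theorem sq_div_add_sq_div_sub_sq_div_add {x y : ℝ} (hx : x ≠ 0) (hy : y ≠ 0) (hxy : x + y ≠ 0)
    (s u : ℝ) :
    s ^ 2 / x + u ^ 2 / y - (s + u) ^ 2 / (x + y) = (s * y - u * x) ^ 2 / (x * y * (x + y)) := by
  field_simp
  ring

theorem inv_mul_add_inv_mul_eq_inv_mul_iff {c A B C : ℝ} (hc : c ≠ 0) (hA : A ≠ 0) (hB : B ≠ 0)
    (hC : C ≠ 0) : (c * A)⁻¹ + (c * B)⁻¹ = (c * C)⁻¹ ↔ A * B = (A + B) * C := by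
  rw [← mul_right_inj' (mul_ne_zero hc (mul_ne_zero (mul_ne_zero hA hB) hC))]
  field_simp
  constructor <;> intro h <;> linarith

section

variable {ι : Type*} [Fintype ι] {a b : ι → ℝ}

theorem sum_inv_pos [Nonempty ι] (ha : ∀ k, 0 < a k) : 0 < ∑ k, (a k)⁻¹ :=
  sum_pos (fun k _ => inv_pos.2 (ha k)) univ_nonempty

theorem add_mul_sub_sum_inv_add_eq_sum_sq (ha : ∀ k, a k ≠ 0) (hb : ∀ k, b k ≠ 0)
    (hab : ∀ k, a k + b k ≠ 0) :
    let A := ∑ k, (a k)⁻¹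
    let B := ∑ k, (b k)⁻¹
    (A + B) * (A * B - (A + B) * ∑ k, (a k + b k)⁻¹) =
      ∑ k, (B * b k - A * a k) ^ 2 / (a k * b k * (a k + b k)) := by
  intro A B
  simp_rw [← sq_div_add_sq_div_sub_sq_div_add (ha _) (hb _) (hab _), div_eq_mul_inv,
    sum_sub_distrib, sum_add_distrib, ← mul_sum]
  ring

theorem sum_inv_mul_sum_inv_eq_iff [Nonempty ι] (ha : ∀ k, 0 < a k) (hb : ∀ k, 0 < b k) :
    (∑ k, (a k)⁻¹) * ∑ k, (b k)⁻¹ = (∑ k, (a k)⁻¹ + ∑ k, (b k)⁻¹) * ∑ k, (a k + b k)⁻¹ ↔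
      ∀ k, (∑ k, (a k)⁻¹) * a k = (∑ k, (b k)⁻¹) * b k := by
  have hden : ∀ k, 0 < a k * b k * (a k + b k) := fun k =>
    mul_pos (mul_pos (ha k) (hb k)) (add_pos (ha k) (hb k))
  rw [← sub_eq_zero, ← mul_eq_zero_iff_left (add_pos (sum_inv_pos ha) (sum_inv_pos hb)).ne',
    add_mul_sub_sum_inv_add_eq_sum_sq (fun k => (ha k).ne') (fun k => (hb k).ne')
      (fun k => (add_pos (ha k) (hb k)).ne'),
    sum_eq_zero_iff_of_nonneg fun k _ => div_nonneg (sq_nonneg _) (hden k).le]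
  refine forall_congr' fun k => ?_
  rw [imp_iff_right (mem_univ k), div_eq_zero_iff, or_iff_left (hden k).ne', sq_eq_zero_iff, sub_eq_zero,
    eq_comm]

theorem forall_sum_inv_mul_eq_iff [Nonempty ι] (ha : ∀ k, 0 < a k) (hb : ∀ k, 0 < b k) :
    (∀ k, (∑ k, (a k)⁻¹) * a k = (∑ k, (b k)⁻¹) * b k) ↔
      ∃ l : ℝ, 0 < l ∧ a = fun k => l * b k := by
  constructor
  · intro h
    refine ⟨(∑ k, (b k)⁻¹) / ∑ k, (a k)⁻¹, div_pos (sum_inv_pos hb) (sum_inv_pos ha),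
      funext fun k => ?_⟩
    rw [div_mul_eq_mul_div, ← h, mul_div_cancel_left₀ _ (sum_inv_pos ha).ne']
  · rintro ⟨l, hl, rfl⟩ k
    simp_rw [mul_inv, ← mul_sum]
    field_simp

end

theorem harmonic_mean_superadditive_eq_iff (K : ℕ) (hK : 1 ≤ K)
    (a b : Fin K → ℝ) (ha : ∀ k, 0 < a k) (hb : ∀ k, 0 < b k) :
    (((K : ℝ)⁻¹ * ∑ k, (a k)⁻¹)⁻¹) + (((K : ℝ)⁻¹ * ∑ k, (b k)⁻¹)⁻¹) =
      ((K : ℝ)⁻¹ * ∑ k, (a k + b k)⁻¹)⁻¹ ↔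
    ∃ l : ℝ, 0 < l ∧ a = fun k => l * b k := by
  have : Nonempty (Fin K) := ⟨⟨0, hK⟩⟩
  have hK' : (K : ℝ)⁻¹ ≠ 0 := by positivity
  rw [inv_mul_add_inv_mul_eq_inv_mul_iff hK' (sum_inv_pos ha).ne' (sum_inv_pos hb).ne'
      (sum_inv_pos fun k => add_pos (ha k) (hb k)).ne',
    sum_inv_mul_sum_inv_eq_iff ha hb, forall_sum_inv_mul_eq_iff ha hb]
end

section
/- Non-commutativity of diffusion and PoE for isotropic Gaussians: let \alpha_1,...,\alpha_K > 0 and \gamma_t \in (0,1). Define c^{PoE} = \gamma_t (\frac{1}{K}\sum_k \alpha_k^{-1})^{-1} + (1-\gamma_t) and c^{notPoE} = (\frac{1}{K}\sum_k (\gamma_t \alpha_k + 1 - \gamma_t)^{-1})^{-1}. Then c^{PoE} \le c^{notPoE}, with equality if and only if \alpha_1 = \dots = \alpha_K. -/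
/-!
In terms of the precisions `βₖ = αₖ⁻¹`, diffusing and inverting is the map
`g x = x / (γ + (1 - γ) x)`, which is strictly concave on `(0, ∞)`. Hence
`c^notPoE = (mean g(βₖ))⁻¹` and `c^PoE = g(mean βₖ)⁻¹`, and the claim is Jensen's inequality
for `g` together with its equality case.
-/

open Finset

theorem strictConcaveOn_div_add_mul {a b : ℝ} (ha : 0 < a) (hb : 0 < b) :
    StrictConcaveOn ℝ (Set.Ioi 0) fun x => x / (a + b * x) := by
  refine ⟨convex_Ioi 0, fun x hx y hy hxy s t hs ht hst => ?_⟩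
  rw [Set.mem_Ioi] at hx hy
  have hu : 0 < a + b * x := by positivity
  have hv : 0 < a + b * y := by positivity
  have hw : 0 < a + b * (s * x + t * y) := by positivity
  have hgap : (s * x + t * y) / (a + b * (s * x + t * y)) -
      (s * (x / (a + b * x)) + t * (y / (a + b * y))) =
      a * b * s * t * (x - y) ^ 2 / ((a + b * x) * (a + b * y) * (a + b * (s * x + t * y))) := by
    obtain rfl : t = 1 - s := by linarith
    field_simp
    ring
  have hgap_pos : 0 < a * b * s * t * (x - y) ^ 2 /
      ((a + b * x) * (a + b * y) * (a + b * (s * x + t * y))) := by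
    have := sub_ne_zero.2 hxy
    positivity
  simp only [smul_eq_mul]
  linarith

theorem inv_div_add_mul_eq {γ b : ℝ} (hb : b ≠ 0) :
    (b / (γ + (1 - γ) * b))⁻¹ = γ * b⁻¹ + (1 - γ) := by
  rw [inv_div, add_div, mul_div_cancel_right₀ _ hb, div_eq_mul_inv]

section Mean

variable {ι : Type*} [Fintype ι] [Nonempty ι] {s : Set ℝ} {f : ℝ → ℝ} {p : ι → ℝ}

theorem ConcaveOn.mean_map_le_map_mean (hf : ConcaveOn ℝ s f) (hp : ∀ i, p i ∈ s) :
    (Fintype.card ι : ℝ)⁻¹ * ∑ i, f (p i) ≤ f ((Fintype.card ι : ℝ)⁻¹ * ∑ i, p i) := by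
  have := hf.le_map_sum (t := univ) (w := fun _ => (Fintype.card ι : ℝ)⁻¹) (p := p)
    (fun _ _ => by positivity) (by simp) (fun i _ => hp i)
  simpa only [smul_eq_mul, ← mul_sum] using this

theorem StrictConcaveOn.map_mean_eq_mean_map_iff (hf : StrictConcaveOn ℝ s f)
    (hp : ∀ i, p i ∈ s) :
    f ((Fintype.card ι : ℝ)⁻¹ * ∑ i, p i) = (Fintype.card ι : ℝ)⁻¹ * ∑ i, f (p i) ↔
      ∀ j k, p j = p k := by
  have := hf.map_sum_eq_iff_of_pos (t := univ) (w := fun _ => (Fintype.card ι : ℝ)⁻¹) (p := p)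
    (fun _ _ => by positivity) (by simp) (fun i _ => hp i)
  simpa only [smul_eq_mul, ← mul_sum, Finset.mem_univ, true_imp_iff] using this

end Mean

theorem diffusion_poe_noncommute (K : ℕ) (hK : 2 ≤ K)
    (α : Fin K → ℝ) (hα : ∀ k, 0 < α k)
    (γ : ℝ) (hγ0 : 0 < γ) (hγ1 : γ < 1) :
    (γ * ((K : ℝ)⁻¹ * ∑ k, (α k)⁻¹)⁻¹ + (1 - γ) ≤
        ((K : ℝ)⁻¹ * ∑ k, (γ * α k + 1 - γ)⁻¹)⁻¹) ∧
    (γ * ((K : ℝ)⁻¹ * ∑ k, (α k)⁻¹)⁻¹ + (1 - γ) =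
        ((K : ℝ)⁻¹ * ∑ k, (γ * α k + 1 - γ)⁻¹)⁻¹ ↔
      ∀ k j, α k = α j) := by
  have : Nonempty (Fin K) := ⟨⟨0, by omega⟩⟩
  set g : ℝ → ℝ := fun x => x / (γ + (1 - γ) * x)
  have hg : StrictConcaveOn ℝ (Set.Ioi 0) g := strictConcaveOn_div_add_mul hγ0 (sub_pos.2 hγ1)
  have hβ : ∀ k, (α k)⁻¹ ∈ Set.Ioi 0 := fun k => inv_pos.2 (hα k)
  have hdiffuse : ∀ k, (γ * α k + 1 - γ)⁻¹ = g (α k)⁻¹ := fun k => by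
    rw [← inv_inv (g _), inv_div_add_mul_eq (inv_ne_zero (hα k).ne'), inv_inv, add_sub_assoc]
  have hmean_g_pos : 0 < (K : ℝ)⁻¹ * ∑ k, g (α k)⁻¹ := by
    refine mul_pos (by positivity) (sum_pos (fun k _ => ?_) univ_nonempty)
    rw [← hdiffuse]
    exact inv_pos.2 (by nlinarith [mul_pos hγ0 (hα k)])
  have hmean_β_ne : (K : ℝ)⁻¹ * ∑ k, (α k)⁻¹ ≠ 0 :=
    (mul_pos (by positivity) (sum_pos (fun k _ => hβ k) univ_nonempty)).ne'
  have hjensen := hg.concaveOn.mean_map_le_map_mean hβ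
  have hequality := hg.map_mean_eq_mean_map_iff hβ
  rw [Fintype.card_fin] at hjensen hequality
  simp only [hdiffuse, ← inv_div_add_mul_eq hmean_β_ne]
  refine ⟨inv_anti₀ hmean_g_pos hjensen, inv_inj.trans (hequality.trans ?_)⟩
  simp only [inv_inj]
end
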